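/- Assume μ < 0. For every a₀ > 0 and S > 0 there exists δ > 0 such that every spherical profile W : [a₀,∞) → ℝ³ with (1/2)|W′(a₀)|² − μ (1 − W(a₀)·e₀) ≤ δ satisfies: (1/2)|W′(a)|² − μ (1 − W(a)·e₀) ≤ S for all a ≥ a₀; the limit lim_{a→∞} [ (1/2)|W′(a)|² − μ (1 − W(a)·e₀) ] exists; and ∫_{a₀}^∞ |W′(a)|²/a da < ∞. -/

import Mathlib

open Set

/-- Euclidean dot product on `ℝ³`. -/
noncomputable def dot3 (v w : Fin 3 → ℝ) : ℝ := v 0 * w 0 + v 1 * w 1 + v 2 * w 2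

/-- Cross product on `ℝ³`. -/
noncomputable def cross3 (v w : Fin 3 → ℝ) : Fin 3 → ℝ :=
  ![v 1 * w 2 - v 2 * w 1, v 2 * w 0 - v 0 * w 2, v 0 * w 1 - v 1 * w 0]

/-- The north pole `e₀ = (1,0,0)`. -/
noncomputable def e0 : Fin 3 → ℝ := ![1, 0, 0]

/-- `g(w) = (k²/2)(1 − w²) + bk(1 − w) − k²(1 − w)²`. -/
noncomputable def gfun (k b : ℝ) (w : ℝ) : ℝ :=
  k ^ 2 / 2 * (1 - w ^ 2) + b * k * (1 - w) - k ^ 2 * (1 - w) ^ 2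

/-- A spherical profile on `J ⊆ (0,∞)`: a twice differentiable `W : J → S² ⊂ ℝ³`
solving the reduced equivariant equation (4.8). -/
def IsSphProfile (k b c μ : ℝ) (J : Set ℝ) (W : ℝ → Fin 3 → ℝ) : Prop :=
  J ⊆ Ioi (0:ℝ) ∧
  (∀ a ∈ J, DifferentiableAt ℝ W a ∧ DifferentiableAt ℝ (deriv W) a) ∧
  (∀ a ∈ J, dot3 (W a) (W a) = 1) ∧
  (∀ a ∈ J,
    deriv (deriv W) a + dot3 (deriv W a) (deriv W a) • W a + (1 / a) • deriv W a
      + (deriv (gfun k b) (dot3 (W a) e0) / a ^ 2) • (e0 - dot3 (W a) e0 • W a)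
      + μ • (e0 - dot3 (W a) e0 • W a)
      + (c / a) • cross3 (W a) (deriv W a) = 0)

/- ### Auxiliary lemmas -/

lemma cs3 (x y z p q r : ℝ) (h1 : x^2+y^2+z^2 = 1) (h2 : x*p+y*q+z*r = 0) :
    p^2 ≤ 2*(1-x)*(p^2+q^2+r^2) := by
  have h4 : (x*p)^2 ≤ (y^2+z^2)*(q^2+r^2) := by
    have h5 : (x*p)^2 = (y*q+z*r)^2 := by
      have : x*p = -(y*q+z*r) := by linarith
      rw [this]; ring
    rw [h5]; nlinarith [sq_nonneg (y*r - z*q)]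
  have key : p^2 ≤ (1-x^2)*(p^2+q^2+r^2) := by nlinarith [sq_nonneg p]
  nlinarith [sq_nonneg (1-x), sq_nonneg p, sq_nonneg q, sq_nonneg r]

lemma gfun_hasDerivAt (k b x : ℝ) :
    HasDerivAt (gfun k b) (-(k^2*x) - b*k + 2*k^2*(1-x)) x := by
  have h1 : HasDerivAt (fun y : ℝ => 1 - y^2) (-(2*x)) x := by
    simpa using ((hasDerivAt_pow 2 x).const_sub 1)
  have h2 : HasDerivAt (fun y : ℝ => 1 - y) (-1 : ℝ) x := by
    simpa using ((hasDerivAt_id x).const_sub 1)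
  have h3 : HasDerivAt (fun y : ℝ => (1 - y)^2) (2*(1-x)*(-1)) x := by
    simpa using (h2.fun_pow 2)
  have h := ((h1.const_mul (k^2/2)).add (h2.const_mul (b*k))).sub (h3.const_mul (k^2))
  have heq : (-(k^2*x) - b*k + 2*k^2*(1-x)) = k^2/2*(-(2*x)) + b*k*(-1) - k^2*(2*(1-x)*(-1)) := by
    ring
  rw [heq]; exact h

lemma gderiv_bound (k b x : ℝ) (hx : |x| ≤ 1) : |deriv (gfun k b) x| ≤ 5*k^2 + |b*k| + 1 := by
  rw [(gfun_hasDerivAt k b x).deriv]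
  rw [abs_le] at hx ⊢
  constructor <;>
    nlinarith [le_abs_self (b*k), neg_abs_le (b*k), sq_nonneg k, abs_nonneg (b*k)]

lemma dot3_self_nonneg (v : Fin 3 → ℝ) : 0 ≤ dot3 v v := by
  unfold dot3; nlinarith [sq_nonneg (v 0), sq_nonneg (v 1), sq_nonneg (v 2)]

lemma wbound (v : Fin 3 → ℝ) (h : dot3 v v = 1) : |dot3 v e0| ≤ 1 := by
  simp only [dot3, e0, Matrix.cons_val_zero, Matrix.cons_val_one, Matrix.head_cons,
    Matrix.cons_val_two, Matrix.tail_cons, mul_one, mul_zero, add_zero] at h ⊢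
  rw [abs_le]
  constructor <;>
    nlinarith [sq_nonneg (v 1), sq_nonneg (v 2), sq_nonneg (v 0 + 1), sq_nonneg (v 0 - 1)]

lemma e0_deriv_bound (ν : ℝ) (hν : 0 < ν) (u v : Fin 3 → ℝ)
    (h1 : dot3 u u = 1) (h2 : dot3 u v = 0) :
    |dot3 v e0| ≤ ν * (1 - dot3 u e0) + dot3 v v / (2*ν) := by
  have hF : 0 ≤ 1 - dot3 u e0 := by
    have := wbound u h1
    rw [abs_le] at this
    linarith [this.2]
  simp only [dot3, e0, Matrix.cons_val_zero, Matrix.cons_val_one, Matrix.head_cons,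
    Matrix.cons_val_two, Matrix.tail_cons, mul_one, mul_zero, add_zero] at h1 h2 hF ⊢
  have key : (v 0)^2 ≤ 2*(1 - u 0)*((v 0)^2+(v 1)^2+(v 2)^2) := by
    have h1' : (u 0)^2 + (u 1)^2 + (u 2)^2 = 1 := by nlinarith [h1]
    have h2' : u 0 * v 0 + u 1 * v 1 + u 2 * v 2 = 0 := h2
    exact cs3 (u 0) (u 1) (u 2) (v 0) (v 1) (v 2) h1' h2'
  have hn : 0 ≤ (v 0)^2+(v 1)^2+(v 2)^2 := by positivity
  have hA : 0 ≤ ν * (1 - u 0) := by positivity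
  have hB : 0 ≤ ((v 0)^2+(v 1)^2+(v 2)^2) / (2*ν) := by positivity
  have h2ν : 0 < 2*ν := by positivity
  have hkey2 : ν^2 * (v 0^2) ≤ ν^2 * (2*(1-u 0)*(v 0^2+v 1^2+v 2^2)) :=
    mul_le_mul_of_nonneg_left key (sq_nonneg ν)
  have hAnn : 0 ≤ 2*ν^2*(1-u 0) := by positivity
  have hBnn : 0 ≤ v 0*v 0+v 1*v 1+v 2*v 2 := by nlinarith [hn]
  have hsq : (2*ν*|v 0|)^2 ≤ (2*ν^2*(1-u 0) + (v 0*v 0+v 1*v 1+v 2*v 2))^2 := by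
    nlinarith [hkey2, sq_nonneg (2*ν^2*(1-u 0) - (v 0*v 0+v 1*v 1+v 2*v 2)), sq_abs (v 0)]
  have key2 : 2*ν*|v 0| ≤ 2*ν^2*(1-u 0) + (v 0*v 0+v 1*v 1+v 2*v 2) := by
    nlinarith [hsq, mul_nonneg (mul_nonneg (by positivity : (0:ℝ) ≤ 2*ν) (abs_nonneg (v 0)))
      (by linarith [hAnn, hBnn] : (0:ℝ) ≤ 2*ν^2*(1-u 0) + (v 0*v 0+v 1*v 1+v 2*v 2))]
  have heqd : ν*(1-u 0) + (v 0*v 0+v 1*v 1+v 2*v 2)/(2*ν)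
      = (2*ν^2*(1-u 0) + (v 0*v 0+v 1*v 1+v 2*v 2))/(2*ν) := by
    field_simp
  have hfin : |v 0| ≤ ν*(1-u 0) + (v 0*v 0+v 1*v 1+v 2*v 2)/(2*ν) := by
    rw [heqd, le_div_iff₀ h2ν]; nlinarith [key2]
  exact hfin

lemma orth3 (a₀ : ℝ) (W : ℝ → Fin 3 → ℝ)
    (hd : ∀ a ∈ Ici a₀, DifferentiableAt ℝ W a)
    (hs : ∀ a ∈ Ici a₀, dot3 (W a) (W a) = 1)
    (a : ℝ) (ha : a ∈ Ici a₀) : dot3 (W a) (deriv W a) = 0 := by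
  have hW := (hd a ha).hasDerivAt
  have hcomp : ∀ i : Fin 3, HasDerivAt (fun t => W t i) (deriv W a i) a :=
    fun i => hasDerivAt_pi.1 hW i
  have hφ : HasDerivAt (fun t => dot3 (W t) (W t)) (2 * dot3 (W a) (deriv W a)) a := by
    have h0 := hcomp 0; have h1 := hcomp 1; have h2 := hcomp 2
    have := ((h0.fun_mul h0).fun_add (h1.fun_mul h1)).fun_add (h2.fun_mul h2)
    refine this.congr_deriv ?_
    simp [dot3]; ring
  have huniq : UniqueDiffWithinAt ℝ (Ici a₀) a := uniqueDiffOn_Ici a₀ a ha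
  have hdw : derivWithin (fun t => dot3 (W t) (W t)) (Ici a₀) a = 2 * dot3 (W a) (deriv W a) :=
    (hφ.hasDerivWithinAt).derivWithin huniq
  have hconst : derivWithin (fun t => dot3 (W t) (W t)) (Ici a₀) a = 0 := by
    have : derivWithin (fun t => dot3 (W t) (W t)) (Ici a₀) a
        = derivWithin (fun _ => (1:ℝ)) (Ici a₀) a :=
      derivWithin_congr (fun x hx => hs x hx) (hs a ha)
    rw [this]
    exact (hasDerivWithinAt_const a (Ici a₀) (1:ℝ)).derivWithin huniq
  rw [hconst] at hdw
  linarith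

lemma energy_hasDerivAt (k b c μ a₀ : ℝ) (W : ℝ → Fin 3 → ℝ)
    (hW : IsSphProfile k b c μ (Ici a₀) W) (a : ℝ) (ha : a ∈ Ici a₀) :
    HasDerivAt (fun t => 1/2 * dot3 (deriv W t) (deriv W t) - μ * (1 - dot3 (W t) e0))
      (-(dot3 (deriv W a) (deriv W a))/a
        - deriv (gfun k b) (dot3 (W a) e0) * (dot3 (deriv W a) e0) / a^2) a := by
  obtain ⟨hJ, hd, hs, heq⟩ := hW
  have ha0 : (0:ℝ) < a := hJ ha
  have hane : a ≠ 0 := ne_of_gt ha0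
  have horth : dot3 (W a) (deriv W a) = 0 := orth3 a₀ W (fun x hx => (hd x hx).1) hs a ha
  have hc : ∀ i : Fin 3, HasDerivAt (fun t => W t i) (deriv W a i) a :=
    fun i => hasDerivAt_pi.1 (hd a ha).1.hasDerivAt i
  have hc' : ∀ i : Fin 3, HasDerivAt (fun t => deriv W t i) (deriv (deriv W) a i) a :=
    fun i => hasDerivAt_pi.1 (hd a ha).2.hasDerivAt i
  have hE : HasDerivAt (fun t => 1/2 * dot3 (deriv W t) (deriv W t) - μ * (1 - dot3 (W t) e0))
      (1/2 * ((deriv (deriv W) a 0 * deriv W a 0 + deriv W a 0 * deriv (deriv W) a 0)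
            + (deriv (deriv W) a 1 * deriv W a 1 + deriv W a 1 * deriv (deriv W) a 1)
            + (deriv (deriv W) a 2 * deriv W a 2 + deriv W a 2 * deriv (deriv W) a 2))
        - μ * (0 - deriv W a 0)) a := by
    have hfun : (fun t => 1/2 * dot3 (deriv W t) (deriv W t) - μ * (1 - dot3 (W t) e0))
        = (fun t => 1/2 * (deriv W t 0 * deriv W t 0 + deriv W t 1 * deriv W t 1
            + deriv W t 2 * deriv W t 2) - μ * (1 - W t 0)) := by
      funext t
      simp [dot3, e0]
    rw [hfun]
    have hdot : HasDerivAt (fun t => deriv W t 0 * deriv W t 0 + deriv W t 1 * deriv W t 1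
        + deriv W t 2 * deriv W t 2)
        ((deriv (deriv W) a 0 * deriv W a 0 + deriv W a 0 * deriv (deriv W) a 0)
            + (deriv (deriv W) a 1 * deriv W a 1 + deriv W a 1 * deriv (deriv W) a 1)
            + (deriv (deriv W) a 2 * deriv W a 2 + deriv W a 2 * deriv (deriv W) a 2)) a :=
      (((hc' 0).mul (hc' 0)).add ((hc' 1).mul (hc' 1))).add ((hc' 2).mul (hc' 2))
    have hw0 : HasDerivAt (fun t => (1:ℝ) - W t 0) (0 - deriv W a 0) a :=
      (hasDerivAt_const a (1:ℝ)).sub (hc 0)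
    exact (hdot.const_mul (1/2)).sub (hw0.const_mul μ)
  convert hE using 1
  have e1 := congrFun (heq a ha) 0
  have e2 := congrFun (heq a ha) 1
  have e3 := congrFun (heq a ha) 2
  simp only [Pi.add_apply, Pi.smul_apply, smul_eq_mul, Pi.sub_apply, Pi.zero_apply,
    cross3, e0, Matrix.cons_val_zero, Matrix.cons_val_one, Matrix.head_cons,
    Matrix.cons_val_two, Matrix.tail_cons, mul_one, mul_zero, add_zero] at e1 e2 e3
  simp only [dot3, e0, Matrix.cons_val_zero, Matrix.cons_val_one, Matrix.head_cons,
    Matrix.cons_val_two, Matrix.tail_cons, mul_one, mul_zero, add_zero] at e1 e2 e3 horth ⊢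
  linear_combination (-(deriv W a 0) * e1 - (deriv W a 1) * e2 - (deriv W a 2) * e3
    + ((deriv W a 0 * deriv W a 0 + deriv W a 1 * deriv W a 1 + deriv W a 2 * deriv W a 2)
       - (deriv (gfun k b) (W a 0) / a ^ 2 + μ) * W a 0) * horth)

set_option maxHeartbeats 2000000 in
/-- For `μ < 0`: spherical profiles with small initial energy
`(1/2)|W′(a₀)|² − μ(1 − W(a₀)·e₀)` keep their energy below `S`, the energy converges
as `a → ∞`, and `∫_{a₀}^∞ |W′|²/a da < ∞`. -/
theorem stmt6 (k b c μ : ℝ) (hμ : μ < 0) :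
    ∀ a₀ > (0:ℝ), ∀ S > (0:ℝ), ∃ δ > (0:ℝ), ∀ W : ℝ → Fin 3 → ℝ,
      IsSphProfile k b c μ (Ici a₀) W →
      1 / 2 * dot3 (deriv W a₀) (deriv W a₀) - μ * (1 - dot3 (W a₀) e0) ≤ δ →
      (∀ a ≥ a₀,
        1 / 2 * dot3 (deriv W a) (deriv W a) - μ * (1 - dot3 (W a) e0) ≤ S) ∧
      (∃ L : ℝ, Filter.Tendsto
        (fun a => 1 / 2 * dot3 (deriv W a) (deriv W a) - μ * (1 - dot3 (W a) e0))
        Filter.atTop (nhds L)) ∧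
      MeasureTheory.IntegrableOn (fun a => dot3 (deriv W a) (deriv W a) / a) (Ici a₀) := by
  intro a₀ ha₀ S hS
  set ν : ℝ := -μ with hνdef
  have hν : 0 < ν := by simp [hνdef]; linarith
  set C₂ : ℝ := 5*k^2 + |b*k| + 1 with hC₂def
  have hC₂ : 0 < C₂ := by positivity
  set M : ℝ := C₂ * (1 + 1/ν) with hMdef
  have hM : 0 < M := by positivity
  refine ⟨S * Real.exp (-(M/a₀)), by positivity, ?_⟩
  intro W hW hδ
  obtain ⟨hJ, hd, hs, heqn⟩ := hW
  have hWprof : IsSphProfile k b c μ (Ici a₀) W := ⟨hJ, hd, hs, heqn⟩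
  set E : ℝ → ℝ := fun t => 1/2 * dot3 (deriv W t) (deriv W t) - μ * (1 - dot3 (W t) e0)
    with hEdef
  -- basic facts
  have hpos : ∀ a ∈ Ici a₀, (0:ℝ) < a := fun a ha => hJ ha
  have hwle : ∀ a ∈ Ici a₀, |dot3 (W a) e0| ≤ 1 := fun a ha => wbound (W a) (hs a ha)
  have hEnn : ∀ a ∈ Ici a₀, 0 ≤ E a := by
    intro a ha
    have h1 := hwle a ha
    rw [abs_le] at h1
    have h2 := dot3_self_nonneg (deriv W a)
    simp only [hEdef]
    nlinarith [h1.2]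
  have horth : ∀ a ∈ Ici a₀, dot3 (W a) (deriv W a) = 0 :=
    fun a ha => orth3 a₀ W (fun x hx => (hd x hx).1) hs a ha
  -- the forcing term
  set r : ℝ → ℝ := fun t =>
    -(deriv (gfun k b) (dot3 (W t) e0) * dot3 (deriv W t) e0 / t^2) with hrdef
  have hEd : ∀ a ∈ Ici a₀, HasDerivAt E (-(dot3 (deriv W a) (deriv W a))/a + r a) a := by
    intro a ha
    have := energy_hasDerivAt k b c μ a₀ W hWprof a ha
    simpa [hrdef, hEdef, sub_eq_add_neg] using this
  -- bound on the forcing term by the energy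
  have hrE : ∀ a ∈ Ici a₀, |r a| ≤ M * E a / a^2 := by
    intro a ha
    have ha0 := hpos a ha
    have hg := gderiv_bound k b (dot3 (W a) e0) (hwle a ha)
    have hp := e0_deriv_bound ν hν (W a) (deriv W a) (hs a ha) (horth a ha)
    have hn := dot3_self_nonneg (deriv W a)
    have hF : 0 ≤ 1 - dot3 (W a) e0 := by
      have := hwle a ha; rw [abs_le] at this; linarith [this.2]
    have habs : |r a| = |deriv (gfun k b) (dot3 (W a) e0)| * |dot3 (deriv W a) e0| / a^2 := by
      rw [hrdef]
      rw [abs_neg, abs_div, abs_mul, abs_of_pos (by positivity : (0:ℝ) < a^2)]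
    rw [habs]
    rw [div_le_div_iff₀ (by positivity) (by positivity)]
    have hstep : |deriv (gfun k b) (dot3 (W a) e0)| * |dot3 (deriv W a) e0|
        ≤ C₂ * (ν * (1 - dot3 (W a) e0) + dot3 (deriv W a) (deriv W a) / (2*ν)) := by
      calc |deriv (gfun k b) (dot3 (W a) e0)| * |dot3 (deriv W a) e0|
          ≤ C₂ * |dot3 (deriv W a) e0| := by
            apply mul_le_mul_of_nonneg_right _ (abs_nonneg _)
            simpa [hC₂def] using hg
        _ ≤ C₂ * (ν * (1 - dot3 (W a) e0) + dot3 (deriv W a) (deriv W a) / (2*ν)) :=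
            mul_le_mul_of_nonneg_left hp (le_of_lt hC₂)
    have hME : C₂ * (ν * (1 - dot3 (W a) e0) + dot3 (deriv W a) (deriv W a) / (2*ν))
        ≤ M * E a := by
      have hE' : E a = 1/2 * dot3 (deriv W a) (deriv W a) + ν * (1 - dot3 (W a) e0) := by
        simp only [hEdef, hνdef]; ring
      rw [hE', hMdef]
      have h1 : 0 ≤ ν * (1 - dot3 (W a) e0) := by positivity
      have hinv : 0 < 1/ν := by positivity
      have expand : C₂ * (ν * (1 - dot3 (W a) e0) + dot3 (deriv W a) (deriv W a) / (2*ν))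
          = C₂ * (ν * (1 - dot3 (W a) e0)) + C₂ * (1/ν) * (1/2 * dot3 (deriv W a) (deriv W a)) := by
        field_simp
      rw [expand]
      have goal : C₂ * (1 + 1/ν) * (1/2 * dot3 (deriv W a) (deriv W a) + ν * (1 - dot3 (W a) e0))
          = C₂ * (1 + 1/ν) * (1/2 * dot3 (deriv W a) (deriv W a))
            + C₂ * (1 + 1/ν) * (ν * (1 - dot3 (W a) e0)) := by ring
      rw [goal]
      have t1 : C₂ * (1/ν) * (1/2 * dot3 (deriv W a) (deriv W a))
          ≤ C₂ * (1 + 1/ν) * (1/2 * dot3 (deriv W a) (deriv W a)) := by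
        apply mul_le_mul_of_nonneg_right _ (by positivity)
        nlinarith
      have t2 : C₂ * (ν * (1 - dot3 (W a) e0)) ≤ C₂ * (1 + 1/ν) * (ν * (1 - dot3 (W a) e0)) := by
        apply mul_le_mul_of_nonneg_right _ h1
        nlinarith
      linarith
    calc |deriv (gfun k b) (dot3 (W a) e0)| * |dot3 (deriv W a) e0| * a^2
        ≤ M * E a * a^2 := by
          apply mul_le_mul_of_nonneg_right _ (by positivity)
          exact le_trans hstep hME
      _ = M * E a * a^2 := rfl
  -- the energy derivative is at most (M/a²) E a
  have hEd_le : ∀ a ∈ Ici a₀, -(dot3 (deriv W a) (deriv W a))/a + r a ≤ M/a^2 * E a := by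
    intro a ha
    have ha0 := hpos a ha
    have h1 : r a ≤ M * E a / a^2 := le_trans (le_abs_self _) (hrE a ha)
    have h2 : -(dot3 (deriv W a) (deriv W a))/a ≤ 0 := by
      have := dot3_self_nonneg (deriv W a)
      apply div_nonpos_of_nonpos_of_nonneg <;> linarith
    have h3 : M * E a / a^2 = M/a^2 * E a := by ring
    rw [h3] at h1
    linarith
  -- Q = E * exp(M/t) is antitone on [a₀,∞)
  set Q : ℝ → ℝ := fun t => E t * Real.exp (M/t) with hQdef
  have hQd : ∀ a ∈ Ici a₀, HasDerivAt Q
      ((-(dot3 (deriv W a) (deriv W a))/a + r a) * Real.exp (M/a)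
        + E a * (Real.exp (M/a) * (M * -(a^2)⁻¹))) a := by
    intro a ha
    have ha0 := hpos a ha
    have hexp : HasDerivAt (fun t : ℝ => Real.exp (M/t)) (Real.exp (M/a) * (M * -(a^2)⁻¹)) a := by
      have hinv : HasDerivAt (fun t : ℝ => M/t) (M * -(a^2)⁻¹) a := by
        simpa [div_eq_mul_inv] using (hasDerivAt_inv (ne_of_gt ha0)).const_mul M
      exact hinv.exp
    exact (hEd a ha).mul hexp
  have hQanti : AntitoneOn Q (Ici a₀) := by
    apply antitoneOn_of_deriv_nonpos (convex_Ici a₀)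
    · intro a ha
      exact ((hQd a ha).continuousAt).continuousWithinAt
    · intro a ha
      rw [interior_Ici] at ha
      exact (hQd a (mem_Ici.2 (le_of_lt ha))).differentiableAt.differentiableWithinAt
    · intro a ha
      rw [interior_Ici] at ha
      have ha' : a ∈ Ici a₀ := mem_Ici.2 (le_of_lt ha)
      have ha0 := hpos a ha'
      rw [(hQd a ha').deriv]
      have h1 := hEd_le a ha'
      have h2 := hEnn a ha'
      have hexp0 : 0 < Real.exp (M/a) := Real.exp_pos _
      have : (-(dot3 (deriv W a) (deriv W a))/a + r a) * Real.exp (M/a)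
            + E a * (Real.exp (M/a) * (M * -(a^2)⁻¹))
          = ((-(dot3 (deriv W a) (deriv W a))/a + r a) - M/a^2 * E a) * Real.exp (M/a) := by
        field_simp
        ring
      rw [this]
      apply mul_nonpos_of_nonpos_of_nonneg _ (le_of_lt hexp0)
      linarith
  -- part 1 : energy stays below S
  have hES : ∀ a ∈ Ici a₀, E a ≤ S := by
    intro a ha
    have ha0 := hpos a ha
    have h1 : E a ≤ Q a := by
      have hone : 1 ≤ Real.exp (M/a) := Real.one_le_exp (by positivity)
      have h0 := hEnn a ha
      calc E a = E a * 1 := (mul_one _).symm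
        _ ≤ E a * Real.exp (M/a) := mul_le_mul_of_nonneg_left hone h0
        _ = Q a := by simp only [hQdef]
    have h2 : Q a ≤ Q a₀ := hQanti (self_mem_Ici) ha ha
    have h3 : Q a₀ ≤ S * Real.exp (-(M/a₀)) * Real.exp (M/a₀) := by
      have hδ' : E a₀ ≤ S * Real.exp (-(M/a₀)) := by
        simp only [hEdef]; exact hδ
      have : Q a₀ = E a₀ * Real.exp (M/a₀) := by simp only [hQdef]
      rw [this]
      exact mul_le_mul_of_nonneg_right hδ' (le_of_lt (Real.exp_pos _))
    have h4 : S * Real.exp (-(M/a₀)) * Real.exp (M/a₀) = S := by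
      rw [mul_assoc, ← Real.exp_add]
      simp
    linarith
  -- continuity of r and of |W'|²/t on [a₀,∞)
  have hgderiv : deriv (gfun k b) = fun x => -(k^2*x) - b*k + 2*k^2*(1-x) :=
    funext fun x => (gfun_hasDerivAt k b x).deriv
  have hWcont : ∀ a ∈ Ici a₀, ContinuousAt W a := fun a ha => (hd a ha).1.continuousAt
  have hdWcont : ∀ a ∈ Ici a₀, ContinuousAt (deriv W) a := fun a ha => (hd a ha).2.continuousAt
  have hwcont : ∀ a ∈ Ici a₀, ContinuousAt (fun t => dot3 (W t) e0) a := by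
    intro a ha
    have h0 : ContinuousAt (fun t => W t 0) a := ((continuous_apply 0).continuousAt).comp (hWcont a ha)
    have h1 : ContinuousAt (fun t => W t 1) a := ((continuous_apply 1).continuousAt).comp (hWcont a ha)
    have h2 : ContinuousAt (fun t => W t 2) a := ((continuous_apply 2).continuousAt).comp (hWcont a ha)
    have : (fun t => dot3 (W t) e0) = fun t => W t 0 * 1 + W t 1 * 0 + W t 2 * 0 := by
      funext t; simp [dot3, e0]
    rw [this]
    fun_prop
  have hdotcont : ∀ a ∈ Ici a₀, ContinuousAt (fun t => dot3 (deriv W t) (deriv W t)) a := by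
    intro a ha
    have h0 : ContinuousAt (fun t => deriv W t 0) a :=
      ((continuous_apply 0).continuousAt).comp (hdWcont a ha)
    have h1 : ContinuousAt (fun t => deriv W t 1) a :=
      ((continuous_apply 1).continuousAt).comp (hdWcont a ha)
    have h2 : ContinuousAt (fun t => deriv W t 2) a :=
      ((continuous_apply 2).continuousAt).comp (hdWcont a ha)
    have : (fun t => dot3 (deriv W t) (deriv W t))
        = fun t => deriv W t 0 * deriv W t 0 + deriv W t 1 * deriv W t 1
            + deriv W t 2 * deriv W t 2 := by
      funext t; simp [dot3]
    rw [this]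
    fun_prop
  have hdot0cont : ∀ a ∈ Ici a₀, ContinuousAt (fun t => dot3 (deriv W t) e0) a := by
    intro a ha
    have h0 : ContinuousAt (fun t => deriv W t 0) a :=
      ((continuous_apply 0).continuousAt).comp (hdWcont a ha)
    have h1 : ContinuousAt (fun t => deriv W t 1) a :=
      ((continuous_apply 1).continuousAt).comp (hdWcont a ha)
    have h2 : ContinuousAt (fun t => deriv W t 2) a :=
      ((continuous_apply 2).continuousAt).comp (hdWcont a ha)
    have : (fun t => dot3 (deriv W t) e0) = fun t => deriv W t 0 * 1 + deriv W t 1 * 0 + deriv W t 2 * 0 := by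
      funext t; simp [dot3, e0]
    rw [this]
    fun_prop
  have hrcont : ∀ a ∈ Ici a₀, ContinuousAt r a := by
    intro a ha
    have ha0 := hpos a ha
    rw [hrdef]
    have hg : ContinuousAt (fun t => deriv (gfun k b) (dot3 (W t) e0)) a := by
      rw [hgderiv]
      have := hwcont a ha
      fun_prop
    have hd0 := hdot0cont a ha
    have ht : ContinuousAt (fun t : ℝ => t^2) a := by fun_prop
    have hne : a^2 ≠ 0 := by positivity
    exact ((hg.mul hd0).div ht hne).neg
  have hncont : ∀ a ∈ Ici a₀, ContinuousAt (fun t => dot3 (deriv W t) (deriv W t) / t) a := by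
    intro a ha
    have ha0 := hpos a ha
    exact (hdotcont a ha).div continuousAt_id (ne_of_gt ha0)
  -- interval integrability of r
  have hrII : ∀ x, a₀ ≤ x → IntervalIntegrable r MeasureTheory.volume a₀ x := by
    intro x hx
    apply ContinuousOn.intervalIntegrable
    intro t ht
    rw [uIcc_of_le hx] at ht
    exact (hrcont t ht.1).continuousWithinAt
  have hnII : ∀ x, a₀ ≤ x →
      IntervalIntegrable (fun t => dot3 (deriv W t) (deriv W t) / t) MeasureTheory.volume a₀ x := by
    intro x hx
    apply ContinuousOn.intervalIntegrable
    intro t ht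
    rw [uIcc_of_le hx] at ht
    exact (hncont t ht.1).continuousWithinAt
  -- bound ∫ |r| over [a₀, x]
  have habs_int : ∀ x, a₀ ≤ x → (∫ t in a₀..x, |r t|) ≤ M*S/a₀ := by
    intro x hx
    have hinv : ∀ t ∈ Icc a₀ x, HasDerivAt (fun s : ℝ => -(M*S)/s) (M*S/t^2) t := by
      intro t ht
      have ht0 : 0 < t := lt_of_lt_of_le ha₀ ht.1
      have h := (hasDerivAt_inv (ne_of_gt ht0)).const_mul (-(M*S))
      have heq : -(M*S) * -(t^2)⁻¹ = M*S/t^2 := by field_simp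
      have hfun : (fun s : ℝ => -(M*S) * s⁻¹) = (fun s : ℝ => -(M*S)/s) := by
        funext s; rw [div_eq_mul_inv]
      rw [hfun, heq] at h
      exact h
    have hMSint : IntervalIntegrable (fun t : ℝ => M*S/t^2) MeasureTheory.volume a₀ x := by
      apply ContinuousOn.intervalIntegrable
      intro t ht
      rw [uIcc_of_le hx] at ht
      have ht0 : 0 < t := lt_of_lt_of_le ha₀ ht.1
      exact ContinuousWithinAt.div continuousWithinAt_const
        ((continuous_pow 2).continuousWithinAt) (by positivity)
    have hcalc : (∫ t in a₀..x, M*S/t^2) = -(M*S)/x - (-(M*S)/a₀) := by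
      apply intervalIntegral.integral_eq_sub_of_hasDerivAt
      · intro t ht
        rw [uIcc_of_le hx] at ht
        exact hinv t ht
      · exact hMSint
    have hmono : (∫ t in a₀..x, |r t|) ≤ ∫ t in a₀..x, M*S/t^2 := by
      apply intervalIntegral.integral_mono_on hx ((hrII x hx).abs) hMSint
      intro t ht
      have ht' : t ∈ Ici a₀ := ht.1
      have ht0 : 0 < t := lt_of_lt_of_le ha₀ ht.1
      calc |r t| ≤ M * E t / t^2 := hrE t ht'
        _ ≤ M*S/t^2 := by gcongr; exact hES t ht'
    have hx0 : 0 < x := lt_of_lt_of_le ha₀ hx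
    have : (0:ℝ) ≤ M*S/x := by positivity
    calc (∫ t in a₀..x, |r t|) ≤ -(M*S)/x - (-(M*S)/a₀) := hcalc ▸ hmono
      _ ≤ M*S/a₀ := by
          rw [neg_div, neg_div]
          linarith
  -- the primitive of the forcing term
  set Iint : ℝ → ℝ := fun x => ∫ t in a₀..x, r t with hIdef
  have hrmeasIoi : MeasureTheory.AEStronglyMeasurable r
      (MeasureTheory.volume.restrict (Ioi a₀)) := by
    apply ContinuousOn.aestronglyMeasurable _ measurableSet_Ioi
    intro t ht
    exact (hrcont t (mem_Ici.2 (le_of_lt ht))).continuousWithinAt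
  have hId : ∀ a ∈ Ioi a₀, HasDerivAt Iint (r a) a := by
    intro a ha
    exact intervalIntegral.integral_hasDerivAt_right (hrII a (le_of_lt ha))
      ⟨Ioi a₀, isOpen_Ioi.mem_nhds ha, hrmeasIoi⟩ (hrcont a (mem_Ici.2 (le_of_lt ha)))
  have hIc0 : ContinuousWithinAt Iint (Ici a₀) a₀ := by
    have h : HasDerivWithinAt Iint (r a₀) (Ici a₀) a₀ :=
      intervalIntegral.integral_hasDerivWithinAt_right (hrII a₀ le_rfl)
        ⟨Ioi a₀, self_mem_nhdsWithin, hrmeasIoi⟩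
        (hrcont a₀ self_mem_Ici).continuousWithinAt
    exact h.continuousWithinAt
  set R : ℝ → ℝ := fun x => E x - Iint x with hRdef
  have hRd : ∀ a ∈ Ioi a₀, HasDerivAt R (-(dot3 (deriv W a) (deriv W a))/a) a := by
    intro a ha
    have h := (hEd a (mem_Ici.2 (le_of_lt ha))).sub (hId a ha)
    have heq2 : -(dot3 (deriv W a) (deriv W a))/a + r a - r a
        = -(dot3 (deriv W a) (deriv W a))/a := by ring
    rw [heq2] at h
    exact h
  have hRcont : ContinuousOn R (Ici a₀) := by
    intro x hx
    rcases eq_or_lt_of_le (mem_Ici.1 hx) with h | h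
    · subst h
      exact ContinuousWithinAt.sub
        ((hEd a₀ self_mem_Ici).continuousAt).continuousWithinAt hIc0
    · exact ((hRd x h).continuousAt).continuousWithinAt
  have hRanti : AntitoneOn R (Ici a₀) := by
    apply antitoneOn_of_deriv_nonpos (convex_Ici a₀) hRcont
    · intro a ha
      rw [interior_Ici] at ha
      exact (hRd a ha).differentiableAt.differentiableWithinAt
    · intro a ha
      rw [interior_Ici] at ha
      rw [(hRd a ha).deriv]
      have h1 := dot3_self_nonneg (deriv W a)
      have h2 := hpos a (mem_Ici.2 (le_of_lt ha))
      apply div_nonpos_of_nonpos_of_nonneg <;> linarith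
  have hInorm : ∀ x, a₀ ≤ x → |Iint x| ≤ M*S/a₀ := by
    intro x hx
    calc |Iint x| ≤ ∫ t in a₀..x, |r t| :=
          intervalIntegral.abs_integral_le_integral_abs hx
      _ ≤ M*S/a₀ := habs_int x hx
  have hRlb : ∀ x ∈ Ici a₀, -(M*S/a₀) ≤ R x := by
    intro x hx
    have h1 := hEnn x hx
    have h2 := (abs_le.1 (hInorm x hx)).2
    have h3 : R x = E x - Iint x := by simp only [hRdef]
    rw [h3]
    have h4 : 0 - Iint x ≤ E x - Iint x := sub_le_sub_right h1 (Iint x)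
    have h5 : -(M*S/a₀) ≤ 0 - Iint x := by rw [zero_sub]; exact neg_le_neg h2
    exact le_trans h5 h4
  -- limit of R
  have hRtend : ∃ L1, Filter.Tendsto R Filter.atTop (nhds L1) := by
    have hanti : Antitone (fun x => R (max x a₀)) := by
      intro u v huv
      exact hRanti (le_max_right u a₀) (le_max_right v a₀) (max_le_max huv le_rfl)
    have hbdd : BddBelow (range (fun x => R (max x a₀))) := by
      refine ⟨-(M*S/a₀), ?_⟩
      rintro y ⟨x, rfl⟩
      exact hRlb _ (le_max_right x a₀)
    refine ⟨_, (tendsto_atTop_ciInf hanti hbdd).congr' ?_⟩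
    filter_upwards [Filter.eventually_ge_atTop a₀] with x hx
    rw [max_eq_left hx]
  -- integrability of r on (a₀, ∞)
  have hrInt : MeasureTheory.IntegrableOn r (Ioi a₀) := by
    apply MeasureTheory.integrableOn_Ioi_of_intervalIntegral_norm_bounded (M*S/a₀) a₀
      (b := fun x : ℝ => max x a₀) (l := Filter.atTop)
    · intro i
      exact (intervalIntegrable_iff_integrableOn_Ioc_of_le (le_max_right i a₀)).1
        (hrII _ (le_max_right i a₀))
    · exact Filter.tendsto_atTop_mono (fun x => le_max_left x a₀) Filter.tendsto_id
    · filter_upwards with i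
      simpa [Real.norm_eq_abs] using habs_int _ (le_max_right i a₀)
  have hItend : Filter.Tendsto Iint Filter.atTop (nhds (∫ t in Ioi a₀, r t)) :=
    MeasureTheory.intervalIntegral_tendsto_integral_Ioi a₀ hrInt Filter.tendsto_id
  -- part 2 : the energy converges
  have hlim : ∃ L, Filter.Tendsto E Filter.atTop (nhds L) := by
    obtain ⟨L1, h1⟩ := hRtend
    refine ⟨L1 + ∫ t in Ioi a₀, r t, ?_⟩
    have h2 := h1.add hItend
    apply h2.congr
    intro x
    simp only [hRdef]
    ring
  -- part 3 : integrability of |W'|²/t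
  have hFTC : ∀ x, a₀ ≤ x →
      (∫ t in a₀..x, dot3 (deriv W t) (deriv W t) / t) = R a₀ - R x := by
    intro x hx
    have h := intervalIntegral.integral_eq_sub_of_hasDeriv_right_of_le hx
      (hRcont.mono (Icc_subset_Ici_self))
      (f' := fun t => -(dot3 (deriv W t) (deriv W t))/t)
      (fun t ht => ((hRd t ht.1).hasDerivWithinAt))
      (by
        apply ContinuousOn.intervalIntegrable
        intro t ht
        rw [uIcc_of_le hx] at ht
        have ht0 : 0 < t := lt_of_lt_of_le ha₀ ht.1
        have hcw := ((hncont t ht.1).continuousWithinAt (s := uIcc a₀ x)).neg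
        simpa [neg_div, Pi.neg_def] using hcw)
    have h2 : (∫ t in a₀..x, -(dot3 (deriv W t) (deriv W t))/t)
        = -∫ t in a₀..x, dot3 (deriv W t) (deriv W t) / t := by
      rw [← intervalIntegral.integral_neg]
      apply intervalIntegral.integral_congr
      intro t _
      ring
    rw [h2] at h
    linarith [h]
  have hnbdd : ∀ x, a₀ ≤ x →
      (∫ t in a₀..x, ‖dot3 (deriv W t) (deriv W t) / t‖) ≤ R a₀ + M*S/a₀ := by
    intro x hx
    have heqn2 : (∫ t in a₀..x, ‖dot3 (deriv W t) (deriv W t) / t‖)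
        = ∫ t in a₀..x, dot3 (deriv W t) (deriv W t) / t := by
      apply intervalIntegral.integral_congr
      intro t ht
      rw [uIcc_of_le hx] at ht
      have ht0 : 0 < t := lt_of_lt_of_le ha₀ ht.1
      have hnn := dot3_self_nonneg (deriv W t)
      show ‖dot3 (deriv W t) (deriv W t) / t‖ = dot3 (deriv W t) (deriv W t) / t
      rw [Real.norm_eq_abs, abs_of_nonneg (div_nonneg hnn (le_of_lt ht0))]
    rw [heqn2, hFTC x hx]
    have := hRlb x hx
    linarith
  have hnInt : MeasureTheory.IntegrableOn
      (fun t => dot3 (deriv W t) (deriv W t) / t) (Ioi a₀) := by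
    apply MeasureTheory.integrableOn_Ioi_of_intervalIntegral_norm_bounded (R a₀ + M*S/a₀) a₀
      (b := fun x : ℝ => max x a₀) (l := Filter.atTop)
    · intro i
      exact (intervalIntegrable_iff_integrableOn_Ioc_of_le (le_max_right i a₀)).1
        (hnII _ (le_max_right i a₀))
    · exact Filter.tendsto_atTop_mono (fun x => le_max_left x a₀) Filter.tendsto_id
    · filter_upwards with i
      exact hnbdd _ (le_max_right i a₀)
  -- assemble
  refine ⟨?_, ?_, ?_⟩
  · intro a ha
    have h := hES a ha
    rw [hEdef] at h
    simpa using h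
  · obtain ⟨L, hL⟩ := hlim
    rw [hEdef] at hL
    exact ⟨L, hL⟩
  · rw [integrableOn_Ici_iff_integrableOn_Ioi]
    exact hnInt
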